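/- arXiv:2012.11088 — 5 statements merged into one kernel-verified Lean document; each statement's English description precedes it below -/
import Mathlib

section
/- Let n ∈ ℝ³ be a unit vector, a ∈ ℝ³ with ‖a‖ ≤ 1, and define the symmetric logarithmic derivative L(θ) = (n × a(θ))·σ. Then for every θ ∈ ℝ, the matrix-valued map θ ↦ ρ_θ = (1/2)(I + a(θ)·σ) is differentiable with derivative equal to (1/2)(L(θ)ρ_θ + ρ_θL(θ)); equivalently, L(θ)ρ_θ + ρ_θL(θ) = (n × a(θ))·σ. -/
open Matrix Complex

noncomputable section

/-- The Pauli matrices. -/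
def σ1 : Matrix (Fin 2) (Fin 2) ℂ := !![0, 1; 1, 0]
def σ2 : Matrix (Fin 2) (Fin 2) ℂ := !![0, -Complex.I; Complex.I, 0]
def σ3 : Matrix (Fin 2) (Fin 2) ℂ := !![1, 0; 0, -1]

/-- For `v ∈ ℝ³`, the matrix `v·σ = v₁σ₁ + v₂σ₂ + v₃σ₃`. -/
def pauliDot (v : Fin 3 → ℝ) : Matrix (Fin 2) (Fin 2) ℂ :=
  (v 0 : ℂ) • σ1 + (v 1 : ℂ) • σ2 + (v 2 : ℂ) • σ3

/-- The Euclidean norm on `ℝ³`. -/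
def norm3 (v : Fin 3 → ℝ) : ℝ := Real.sqrt (v ⬝ᵥ v)

/-- The rotated Bloch vector
`a(θ) = cos θ · a + sin θ · (n × a) + 2 sin²(θ/2) (n·a) · n`. -/
def blochRot (n a : Fin 3 → ℝ) (θ : ℝ) : Fin 3 → ℝ :=
  Real.cos θ • a + Real.sin θ • (crossProduct n a)
    + (2 * Real.sin (θ / 2) ^ 2 * (n ⬝ᵥ a)) • n

/-- The qubit state `ρ_θ = (1/2)(I + a(θ)·σ)`. -/
def qubitState (n a : Fin 3 → ℝ) (θ : ℝ) : Matrix (Fin 2) (Fin 2) ℂ :=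
  (1 / 2 : ℂ) • (1 + pauliDot (blochRot n a θ))

/-- The symmetric logarithmic derivative `L(θ) = (n × a(θ))·σ`. -/
def sld (n a : Fin 3 → ℝ) (θ : ℝ) : Matrix (Fin 2) (Fin 2) ℂ :=
  pauliDot (crossProduct n (blochRot n a θ))

lemma pauli_anticomm (w v : Fin 3 → ℝ)
    (h : v 0 * w 0 + v 1 * w 1 + v 2 * w 2 = 0) :
    pauliDot v * ((1/2:ℂ) • (1 + pauliDot w)) + ((1/2:ℂ) • (1 + pauliDot w)) * pauliDot v
      = pauliDot v := by
  ext i j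
  fin_cases i <;> fin_cases j <;>
    simp [pauliDot, σ1, σ2, σ3, Matrix.mul_apply, Fin.sum_univ_two, Matrix.one_apply,
      Matrix.add_apply, Matrix.smul_apply, smul_eq_mul, Matrix.cons_val_zero,
      Matrix.cons_val_one, Matrix.head_cons, Matrix.one_fin_two]
  · ring_nf; rw [Complex.I_sq]; ring_nf; norm_cast; linear_combination h
  · ring
  · ring
  · ring_nf; rw [Complex.I_sq]; ring_nf; norm_cast; linear_combination h

/-- `θ ↦ ρ_θ` is differentiable (entrywise) with derivative
`(1/2)(L(θ)ρ_θ + ρ_θL(θ))`; equivalently `L(θ)ρ_θ + ρ_θL(θ) = (n × a(θ))·σ`. -/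
theorem sld_equation
    (n a : Fin 3 → ℝ) (hn : norm3 n = 1) (ha : norm3 a ≤ 1) (θ : ℝ) :
    (∀ i j, HasDerivAt (fun t => qubitState n a t i j)
        (((1 / 2 : ℂ) • (sld n a θ * qubitState n a θ + qubitState n a θ * sld n a θ)) i j) θ)
    ∧ sld n a θ * qubitState n a θ + qubitState n a θ * sld n a θ
        = pauliDot (crossProduct n (blochRot n a θ)) := by
  -- `n` is a unit vector
  have hnn : n 0 ^ 2 + n 1 ^ 2 + n 2 ^ 2 = 1 := by
    have h1 : n ⬝ᵥ n = 1 := by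
      have h0 : (0:ℝ) ≤ n ⬝ᵥ n := by
        simp [dotProduct, Fin.sum_univ_three]; nlinarith [sq_nonneg (n 0), sq_nonneg (n 1), sq_nonneg (n 2)]
      have := hn
      unfold norm3 at this
      nlinarith [Real.sq_sqrt h0, this]
    simpa [dotProduct, Fin.sum_univ_three, sq] using h1
  -- orthogonality of `n × a(θ)` and `a(θ)`
  set w := blochRot n a θ with hw
  have horth : (crossProduct n w) 0 * w 0 + (crossProduct n w) 1 * w 1
      + (crossProduct n w) 2 * w 2 = 0 := by
    simp [crossProduct]; ring
  -- part 2
  have hmain : sld n a θ * qubitState n a θ + qubitState n a θ * sld n a θ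
      = pauliDot (crossProduct n w) := by
    have := pauli_anticomm w (crossProduct n w) horth
    simpa [sld, qubitState, hw] using this
  refine ⟨?_, hmain⟩
  -- vector identity: d/dθ a(θ) = n × a(θ)
  have hvec : ∀ k, (crossProduct n w) k
      = -Real.sin θ * a k + Real.cos θ * (crossProduct n a) k
        + Real.sin θ * (n ⬝ᵥ a) * n k := by
    intro k
    fin_cases k <;>
      simp [crossProduct, blochRot, dotProduct, Fin.sum_univ_three, hw, Pi.add_apply,
        Pi.smul_apply, smul_eq_mul, Matrix.vecHead, Matrix.vecTail, Function.comp] <;>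
      first
        | linear_combination (Real.sin θ * a 0) * hnn
        | linear_combination (Real.sin θ * a 1) * hnn
        | linear_combination (Real.sin θ * a 2) * hnn
        | linear_combination (-(Real.sin θ * a 0)) * hnn
        | linear_combination (-(Real.sin θ * a 1)) * hnn
        | linear_combination (-(Real.sin θ * a 2)) * hnn
  intro i j
  -- the entry as an explicit function of t
  have hfun : (fun t => qubitState n a t i j)
      = fun t => (1/2:ℂ) * ((1 : Matrix (Fin 2) (Fin 2) ℂ) i j
          + (((Real.cos t : ℝ) : ℂ) * pauliDot a i j
            + ((Real.sin t : ℝ) : ℂ) * pauliDot (crossProduct n a) i j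
            + ((2 * Real.sin (t/2)^2 * (n ⬝ᵥ a) : ℝ) : ℂ) * pauliDot n i j)) := by
    funext t
    simp only [qubitState, blochRot, pauliDot, Matrix.add_apply, Matrix.smul_apply,
      Pi.add_apply, Pi.smul_apply, smul_eq_mul]
    push_cast
    ring
  have h1 : HasDerivAt (fun t : ℝ => ((Real.cos t : ℝ) : ℂ)) ((-Real.sin θ : ℝ) : ℂ) θ :=
    (Real.hasDerivAt_cos θ).ofReal_comp
  have h2 : HasDerivAt (fun t : ℝ => ((Real.sin t : ℝ) : ℂ)) ((Real.cos θ : ℝ) : ℂ) θ :=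
    (Real.hasDerivAt_sin θ).ofReal_comp
  have h3 : HasDerivAt (fun t : ℝ => ((2 * Real.sin (t/2)^2 * (n ⬝ᵥ a) : ℝ) : ℂ))
      ((Real.sin θ * (n ⬝ᵥ a) : ℝ) : ℂ) θ := by
    have ha1 : HasDerivAt (fun t : ℝ => t / 2) (1/2 : ℝ) θ := by
      simpa using (hasDerivAt_id θ).div_const 2
    have ha2 : HasDerivAt (fun t : ℝ => Real.sin (t/2)) (Real.cos (θ/2) * (1/2)) θ :=
      by have := (Real.hasDerivAt_sin (θ/2)).comp θ ha1; exact this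
    have ha3 := ha2.pow 2
    have ha4 := (ha3.const_mul (2:ℝ)).mul_const (n ⬝ᵥ a)
    have ha5 := ha4.ofReal_comp
    have hs : Real.sin θ = 2 * Real.sin (θ/2) * Real.cos (θ/2) := by
      rw [← Real.sin_two_mul]; congr 1; ring
    convert ha5 using 1
    · funext t; simp only [Pi.pow_apply]
    push_cast [hs]
    ring
  have hsum := ((h1.mul_const (pauliDot a i j)).add
      (h2.mul_const (pauliDot (crossProduct n a) i j))).add
      (h3.mul_const (pauliDot n i j))
  have hfinal := (hsum.const_add ((1 : Matrix (Fin 2) (Fin 2) ℂ) i j)).const_mul (1/2:ℂ)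
  rw [hfun]
  have hval : ((1 / 2 : ℂ) • (sld n a θ * qubitState n a θ + qubitState n a θ * sld n a θ)) i j
      = (1/2:ℂ) * (((-Real.sin θ : ℝ) : ℂ) * pauliDot a i j
          + ((Real.cos θ : ℝ) : ℂ) * pauliDot (crossProduct n a) i j
          + ((Real.sin θ * (n ⬝ᵥ a) : ℝ) : ℂ) * pauliDot n i j) := by
    rw [hmain]
    rw [Matrix.smul_apply, smul_eq_mul]
    simp only [pauliDot, Matrix.add_apply, Matrix.smul_apply, smul_eq_mul,
      hvec 0, hvec 1, hvec 2]
    push_cast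
    ring
  rw [hval]
  convert hfinal using 1
  rfl
  rfl

end
end

section
/- Let n ∈ ℝ³ be a unit vector and a ∈ ℝ³ with ‖a‖ ≤ 1, and let L(θ) = (n × a(θ))·σ. Then for every θ ∈ ℝ, the quantum Fisher information Tr[ρ_θ L(θ)²] equals ‖a‖² − (a·n)²; in particular it is independent of θ. -/
/-!
Since `(v·σ)² = ‖v‖² I` and `Tr ρ_θ = 1`, the Fisher information `Tr[ρ_θ L(θ)²]` is
`‖n × a(θ)‖² = ‖a(θ)‖² − (n·a(θ))²`. For a unit axis `n`, `a(θ)` is the Rodrigues rotation of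
`a` about `n` by the angle `θ`, which preserves both `‖a‖` and `n·a`.
-/

open Matrix Complex

noncomputable section

lemma pauliDot_eq (v : Fin 3 → ℝ) :
    pauliDot v = !![(v 2 : ℂ), v 0 - v 1 * I; v 0 + v 1 * I, -v 2] := by
  ext i j
  fin_cases i <;> fin_cases j <;> simp [pauliDot, σ1, σ2, σ3]; ring

lemma pauliDot_sq (v : Fin 3 → ℝ) : pauliDot v ^ 2 = ((v ⬝ᵥ v : ℝ) : ℂ) • 1 := by
  rw [pauliDot_eq, sq, mul_fin_two]
  ext i j
  fin_cases i <;> fin_cases j <;> simp [dotProduct, Fin.sum_univ_three] <;>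
    first | ring1 | linear_combination (-(v 1 : ℂ) ^ 2) * I_sq

lemma trace_pauliDot (v : Fin 3 → ℝ) : trace (pauliDot v) = 0 := by
  simp [pauliDot_eq, trace_fin_two]

lemma trace_qubitState (n a : Fin 3 → ℝ) (θ : ℝ) : trace (qubitState n a θ) = 1 := by
  rw [qubitState, trace_smul, trace_add, trace_pauliDot, trace_one]
  norm_num

lemma norm3_sq (v : Fin 3 → ℝ) : norm3 v ^ 2 = v ⬝ᵥ v :=
  Real.sq_sqrt (by simpa using dotProduct_self_star_nonneg v)

lemma two_mul_sin_half_sq (θ : ℝ) : 2 * Real.sin (θ / 2) ^ 2 = 1 - Real.cos θ := by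
  have h := Real.cos_two_mul_eq_one_sub (θ / 2)
  rw [mul_div_cancel₀ θ two_ne_zero] at h
  linarith

lemma cross_dotProduct_cross_self {n : Fin 3 → ℝ} (hn : n ⬝ᵥ n = 1) (v : Fin 3 → ℝ) :
    n ⨯₃ v ⬝ᵥ n ⨯₃ v = v ⬝ᵥ v - (n ⬝ᵥ v) ^ 2 := by
  rw [cross_dot_cross, hn, dotProduct_comm v n]
  ring

section blochRot

variable {n : Fin 3 → ℝ} (a : Fin 3 → ℝ) (θ : ℝ)

lemma blochRot_eq : blochRot n a θ =
    Real.cos θ • a + Real.sin θ • n ⨯₃ a + ((1 - Real.cos θ) * (n ⬝ᵥ a)) • n := by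
  rw [blochRot, two_mul_sin_half_sq]

lemma dotProduct_blochRot (hn : n ⬝ᵥ n = 1) : n ⬝ᵥ blochRot n a θ = n ⬝ᵥ a := by
  simp only [blochRot_eq, dotProduct_add, dotProduct_smul, dot_self_cross, hn, smul_eq_mul]
  ring

lemma blochRot_dotProduct_self (hn : n ⬝ᵥ n = 1) :
    blochRot n a θ ⬝ᵥ blochRot n a θ = a ⬝ᵥ a := by
  have hperp_a : n ⨯₃ a ⬝ᵥ a = 0 := by rw [dotProduct_comm, dot_cross_self]
  have hperp_n : n ⨯₃ a ⬝ᵥ n = 0 := by rw [dotProduct_comm, dot_self_cross]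
  simp only [blochRot_eq, dotProduct_add, add_dotProduct, dotProduct_smul, smul_dotProduct,
    smul_eq_mul, dot_self_cross, dot_cross_self, hperp_a, hperp_n,
    cross_dotProduct_cross_self hn, hn, dotProduct_comm a n]
  linear_combination (a ⬝ᵥ a - (n ⬝ᵥ a) ^ 2) * Real.sin_sq_add_cos_sq θ

lemma cross_blochRot_dotProduct_self (hn : n ⬝ᵥ n = 1) :
    n ⨯₃ blochRot n a θ ⬝ᵥ n ⨯₃ blochRot n a θ = a ⬝ᵥ a - (n ⬝ᵥ a) ^ 2 := by
  rw [cross_dotProduct_cross_self hn, dotProduct_blochRot a θ hn, blochRot_dotProduct_self a θ hn]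

end blochRot

theorem quantum_fisher_information_eq_general
    (n a : Fin 3 → ℝ) (hn : norm3 n = 1) (θ : ℝ) :
    Matrix.trace (qubitState n a θ * (sld n a θ) ^ 2)
      = ((norm3 a ^ 2 - (a ⬝ᵥ n) ^ 2 : ℝ) : ℂ) := by
  have hn' : n ⬝ᵥ n = 1 := by rwa [norm3, Real.sqrt_eq_one] at hn
  rw [sld, pauliDot_sq, Matrix.mul_smul, Matrix.mul_one, trace_smul, trace_qubitState,
    smul_eq_mul, mul_one, cross_blochRot_dotProduct_self a θ hn', norm3_sq, dotProduct_comm a n]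

/-- the quantum Fisher information `Tr[ρ_θ L(θ)²]` equals
`‖a‖² − (a·n)²`, independently of `θ`. -/
theorem quantum_fisher_information_eq
    (n a : Fin 3 → ℝ) (hn : norm3 n = 1) (ha : norm3 a ≤ 1) (θ : ℝ) :
    Matrix.trace (qubitState n a θ * (sld n a θ) ^ 2)
      = ((norm3 a ^ 2 - (a ⬝ᵥ n) ^ 2 : ℝ) : ℂ) :=
  quantum_fisher_information_eq_general n a hn θ

end
end

section
/- Let n ∈ ℝ³ be a unit vector, a ∈ ℝ³ with ‖a‖ ≤ 1, suppose q := ‖a‖² − (a·n)² > 0, and set d := (a − (a·n)·n)/√q. Then for all x, θ ∈ ℝ, (1/2π)·Tr[ρ_θ (I + cos(x)·(d·σ) − sin(x)·((d × n)·σ))] = (1/2π)(1 + √q · cos(x − θ)). (This is the outcome probability density of the optimal covariant measurement M∗ in the state ρ_θ.) -/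
open Matrix Complex

noncomputable section

lemma trace_formula (b v : Fin 3 → ℝ) :
    Matrix.trace ((1/2 : ℂ) • (1 + pauliDot b) * (1 + pauliDot v))
      = 1 + ((b ⬝ᵥ v : ℝ) : ℂ) := by
  simp [pauliDot, σ1, σ2, σ3, Matrix.trace, Matrix.mul_apply, Fin.sum_univ_succ,
    dotProduct, Matrix.one_apply]
  ring_nf
  simp [Complex.ext_iff]

lemma pauliDot_comb (c s : ℝ) (u v : Fin 3 → ℝ) :
    1 + (c : ℂ) • pauliDot u - (s : ℂ) • pauliDot v
      = 1 + pauliDot (c • u - s • v) := by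
  ext i j
  fin_cases i <;> fin_cases j <;>
    simp [pauliDot, σ1, σ2, σ3, Matrix.one_apply] <;> push_cast <;> ring

lemma key (n a : Fin 3 → ℝ) (hn : norm3 n = 1) (q : ℝ)
    (hqdef : q = norm3 a ^ 2 - (a ⬝ᵥ n) ^ 2) (x θ : ℝ) :
    blochRot n a θ ⬝ᵥ (Real.cos x • (a - (a ⬝ᵥ n) • n)
        - Real.sin x • crossProduct (a - (a ⬝ᵥ n) • n) n)
      = q * Real.cos (x - θ) := by
  have h0a : (0:ℝ) ≤ a ⬝ᵥ a := by
    rw [dotProduct]; exact Finset.sum_nonneg fun i _ => mul_self_nonneg _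
  have hn1 : n ⬝ᵥ n = 1 := by
    have := hn; rw [norm3, Real.sqrt_eq_one] at this; exact this
  have hq : q = a ⬝ᵥ a - (a ⬝ᵥ n) ^ 2 := by
    rw [hqdef, norm3, Real.sq_sqrt h0a]
  have hcross : crossProduct (a - (a ⬝ᵥ n) • n) n
      = crossProduct a n - (a ⬝ᵥ n) • crossProduct n n := by
    rw [map_sub, _root_.map_smul]; rfl
  rw [hcross, cross_self, smul_zero, sub_zero]
  simp only [blochRot, add_dotProduct, smul_dotProduct, dotProduct_sub,
    dotProduct_smul, smul_eq_mul, dot_self_cross, dot_cross_self,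
    cross_dot_cross, dotProduct_comm n a]
  rw [hq, Real.cos_sub, hn1]
  have h1 : a ⬝ᵥ crossProduct a n = 0 := by
    rw [triple_product_permutation]; exact dot_cross_self n a
  have h2 : n ⬝ᵥ crossProduct a n = 0 := dot_cross_self a n
  have h3 : crossProduct n a ⬝ᵥ crossProduct a n
      = (n ⬝ᵥ a) * (a ⬝ᵥ n) - (n ⬝ᵥ n) * (a ⬝ᵥ a) := cross_dot_cross n a a n
  have hA : crossProduct n a ⬝ᵥ a = 0 := by
    rw [dotProduct_comm]; exact dot_cross_self n a
  have hB : crossProduct n a ⬝ᵥ n = 0 := by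
    rw [dotProduct_comm]; exact dot_self_cross n a
  have hsin : 2 * Real.sin (θ/2) ^ 2 = 1 - Real.cos θ := by
    have h1 := Real.sin_sq_add_cos_sq (θ/2)
    have h2 : Real.cos θ = 2 * Real.cos (θ/2)^2 - 1 := by
      have := Real.cos_two_mul (θ/2)
      rw [show 2*(θ/2) = θ by ring] at this
      linarith
    linarith
  rw [hA, hB, hsin]
  ring

/-- outcome probability density of the optimal covariant measurement `M∗`,
generated by `d = (a − (a·n)n)/√q` with `q = ‖a‖² − (a·n)² > 0`, in the state `ρ_θ`:
`(1/2π)·Tr[ρ_θ (I + cos x (d·σ) − sin x ((d×n)·σ))] = (1/2π)(1 + √q cos(x − θ))`. -/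
theorem optimal_covariant_outcome_density
    (n a : Fin 3 → ℝ) (hn : norm3 n = 1) (ha : norm3 a ≤ 1)
    (q : ℝ) (hqdef : q = norm3 a ^ 2 - (a ⬝ᵥ n) ^ 2) (hq : 0 < q)
    (d : Fin 3 → ℝ) (hd : d = (Real.sqrt q)⁻¹ • (a - (a ⬝ᵥ n) • n)) (x θ : ℝ) :
    (1 / (2 * Real.pi) : ℂ) * Matrix.trace (qubitState n a θ *
        (1 + (Real.cos x : ℂ) • pauliDot d
          - (Real.sin x : ℂ) • pauliDot (crossProduct d n)))
      = ((1 / (2 * Real.pi) * (1 + Real.sqrt q * Real.cos (x - θ)) : ℝ) : ℂ) := by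
  set r := Real.sqrt q with hr
  have hrpos : 0 < r := Real.sqrt_pos.mpr hq
  have hr2 : r ^ 2 = q := Real.sq_sqrt hq.le
  set e : Fin 3 → ℝ := a - (a ⬝ᵥ n) • n with he
  -- rewrite the measurement operator as 1 + pauliDot V
  rw [qubitState, pauliDot_comb]
  rw [trace_formula]
  -- compute the dot product
  have hV : Real.cos x • d - Real.sin x • crossProduct d n
      = r⁻¹ • (Real.cos x • e - Real.sin x • crossProduct e n) := by
    rw [hd, LinearMap.map_smul, LinearMap.smul_apply]
    module
  have hrq : r⁻¹ * q = r := by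
    rw [← hr2, sq]; field_simp
  have hdot : blochRot n a θ ⬝ᵥ (Real.cos x • d - Real.sin x • crossProduct d n)
      = r * Real.cos (x - θ) := by
    rw [hV, dotProduct_smul, smul_eq_mul, key n a hn q hqdef x θ, ← mul_assoc, hrq]
  rw [hdot]
  push_cast
  ring
end
end

section
/- For every real q with 0 ≤ q < 1, the Fisher information of the optimal covariant measurement admits the closed form (1/2π) ∫₀^{2π} q·sin²(x)/(1 + √q·cos(x)) dx = 1 − √(1 − q). -/
open Real intervalIntegral

lemma fisher_aux (a b s c : ℝ) (hb2 : b^2 = 1 - a^2) (hbpos : 0 < b)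
    (hs : s^2 + c^2 = 1) (hDne : 1+a*c ≠ 0) (hCne : 1+b+a*c ≠ 0) :
    1 / (1+a*c) = (1 - 2 * (1 / (1 + (a * s / (1+b+a*c)) ^ 2) *
        ((a * c * (1+b+a*c) - a * s * (a * -s)) / (1+b+a*c) ^ 2))) / b := by
  have hb := hbpos.ne'
  field_simp
  ring_nf
  linear_combination (a^2*(1+b+a*c)) * hs + (1+b+a*c) * hb2

lemma fisher_key_integral (a : ℝ) (ha0 : 0 ≤ a) (ha1 : a < 1) :
    ∫ x in (0:ℝ)..(2*π), 1 / (1 + a * Real.cos x)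
      = 2 * π / Real.sqrt (1 - a^2) := by
  set b := Real.sqrt (1 - a^2) with hbdef
  have hb2 : b ^ 2 = 1 - a ^ 2 := Real.sq_sqrt (by nlinarith)
  have hbpos : 0 < b := Real.sqrt_pos.mpr (by nlinarith)
  have hden : ∀ x : ℝ, 0 < 1 + a * Real.cos x := by
    intro x; nlinarith [Real.neg_one_le_cos x, Real.cos_le_one x]
  have hden2 : ∀ x : ℝ, 0 < 1 + b + a * Real.cos x := by
    intro x; nlinarith [Real.neg_one_le_cos x, Real.cos_le_one x]
  have hderiv : ∀ x ∈ Set.uIcc (0:ℝ) (2*π),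
      HasDerivAt (fun x => (x - 2 * Real.arctan (a * Real.sin x / (1 + b + a * Real.cos x))) / b)
        (1 / (1 + a * Real.cos x)) x := by
    intro x _
    have hd := (hden2 x).ne'
    have h1 : HasDerivAt (fun x : ℝ => a * Real.sin x) (a * Real.cos x) x :=
      (Real.hasDerivAt_sin x).const_mul a
    have h2 : HasDerivAt (fun x : ℝ => 1 + b + a * Real.cos x) (a * (-Real.sin x)) x :=
      ((Real.hasDerivAt_cos x).const_mul a).const_add (1 + b)
    have h3 := (h1.div h2 hd).arctan
    have h4 := ((hasDerivAt_id x).sub (h3.const_mul 2)).div_const b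
    refine h4.congr_deriv (Eq.symm ?_)
    exact fisher_aux a b (Real.sin x) (Real.cos x) hb2 hbpos
      (Real.sin_sq_add_cos_sq x) (hden x).ne' hd
  have hcont : IntervalIntegrable (fun x => 1 / (1 + a * Real.cos x))
      MeasureTheory.volume 0 (2*π) :=
    (continuous_const.div (by continuity) (fun x => (hden x).ne')).intervalIntegrable _ _
  rw [intervalIntegral.integral_eq_sub_of_hasDerivAt hderiv hcont]
  simp [Real.sin_two_pi, Real.cos_two_pi]

/-- closed form of the Fisher information of the optimal covariant
measurement: for `0 ≤ q < 1`,
`(1/2π) ∫₀^{2π} q·sin²x/(1 + √q·cos x) dx = 1 − √(1 − q)`. -/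
theorem fisher_information_optimal_covariant (q : ℝ) (hq0 : 0 ≤ q) (hq1 : q < 1) :
    (1 / (2 * Real.pi)) *
        ∫ x in (0 : ℝ)..(2 * Real.pi),
          q * Real.sin x ^ 2 / (1 + Real.sqrt q * Real.cos x)
      = 1 - Real.sqrt (1 - q) := by
  set a := Real.sqrt q with hadef
  have ha2 : a ^ 2 = q := Real.sq_sqrt hq0
  have ha0 : 0 ≤ a := Real.sqrt_nonneg q
  have ha1 : a < 1 := by
    rw [hadef, show (1:ℝ) = Real.sqrt 1 by simp]
    exact Real.sqrt_lt_sqrt hq0 hq1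
  have hden : ∀ x : ℝ, 0 < 1 + a * Real.cos x := by
    intro x; nlinarith [Real.neg_one_le_cos x, Real.cos_le_one x]
  have hbq : Real.sqrt (1 - a^2) = Real.sqrt (1 - q) := by rw [ha2]
  have hb2 : Real.sqrt (1 - q) ^ 2 = 1 - q := Real.sq_sqrt (by linarith)
  have hbpos : 0 < Real.sqrt (1 - q) := Real.sqrt_pos.mpr (by linarith)
  have hcongr : ∀ x : ℝ,
      q * Real.sin x ^ 2 / (1 + a * Real.cos x)
        = (1 - a * Real.cos x) - (1 - q) * (1 / (1 + a * Real.cos x)) := by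
    intro x
    have hs := Real.sin_sq_add_cos_sq x
    have hD := (hden x).ne'
    field_simp
    linear_combination q * hs + (Real.cos x ^ 2) * ha2
  have hI1 : IntervalIntegrable (fun x => 1 / (1 + a * Real.cos x))
      MeasureTheory.volume 0 (2*π) :=
    (continuous_const.div (by continuity) (fun x => (hden x).ne')).intervalIntegrable _ _
  have hI2 : IntervalIntegrable (fun x : ℝ => 1 - a * Real.cos x)
      MeasureTheory.volume 0 (2*π) := (by continuity : Continuous _).intervalIntegrable _ _
  calc (1 / (2 * π)) * ∫ x in (0:ℝ)..(2*π), q * Real.sin x ^ 2 / (1 + a * Real.cos x)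
      = (1 / (2 * π)) * ∫ x in (0:ℝ)..(2*π),
          ((1 - a * Real.cos x) - (1 - q) * (1 / (1 + a * Real.cos x))) := by
        congr 1
        exact intervalIntegral.integral_congr (fun x _ => hcongr x)
    _ = (1 / (2 * π)) * ((∫ x in (0:ℝ)..(2*π), (1 - a * Real.cos x))
          - (1 - q) * ∫ x in (0:ℝ)..(2*π), 1 / (1 + a * Real.cos x)) := by
        rw [intervalIntegral.integral_sub hI2 (hI1.const_mul _),
          intervalIntegral.integral_const_mul]
    _ = 1 - Real.sqrt (1 - q) := by
        rw [fisher_key_integral a ha0 ha1, hbq]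
        have h5 : (∫ x in (0:ℝ)..(2*π), (1 - a * Real.cos x)) = 2 * π := by
          rw [intervalIntegral.integral_sub intervalIntegrable_const
            (((by continuity : Continuous fun x : ℝ => a * Real.cos x)).intervalIntegrable _ _)]
          simp [Real.sin_two_pi, intervalIntegral.integral_const_mul]
        rw [h5]
        have hpi := Real.pi_pos
        have hb := hbpos.ne'
        field_simp
        linear_combination hb2
end

section
/- For every real q with 0 ≤ q < 1, the Fisher information of the covariant POVM with d = ±(n × a) admits the closed form (1/2π) ∫₀^{2π} q²·cos²(x)/(1 + q·sin(x)) dx = 1 − √(1 − q²). Moreover, 1 − √(1 − q²) ≤ 1 − √(1 − q) for all 0 ≤ q ≤ 1, i.e. this Fisher information never exceeds the Fisher information 1 − √(1 − q) of the optimal covariant measurement M∗. -/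
open Real Filter Topology intervalIntegral

private lemma denom_pos (c : ℝ) (hc : 0 < c) (x : ℝ) :
    0 < Real.cos x ^ 2 + c ^ 2 * Real.sin x ^ 2 := by
  nlinarith [Real.sin_sq_add_cos_sq x, sq_nonneg (Real.sin x), sq_nonneg (Real.cos x),
    mul_pos hc hc, sq_nonneg (c * Real.sin x), sq_nonneg (c * Real.cos x)]

private lemma integral_quarter (c : ℝ) (hc : 0 < c) :
    ∫ x in (0:ℝ)..(Real.pi/2), 1 / (Real.cos x ^ 2 + c ^ 2 * Real.sin x ^ 2)
      = Real.pi / (2 * c) := by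
  set f : ℝ → ℝ := fun x => 1 / (Real.cos x ^ 2 + c ^ 2 * Real.sin x ^ 2) with hf
  have hd : ∀ x, (Real.cos x ^ 2 + c ^ 2 * Real.sin x ^ 2) ≠ 0 := fun x => (denom_pos c hc x).ne'
  have hfc : Continuous f := continuous_const.div (by continuity) hd
  have hint : ∀ a b : ℝ, IntervalIntegrable f MeasureTheory.volume a b :=
    fun a b => hfc.intervalIntegrable a b
  have key : ∀ b ∈ Set.Ico (0:ℝ) (Real.pi/2),
      (∫ x in (0:ℝ)..b, f x) = Real.arctan (c * Real.tan b) / c := by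
    intro b hb
    have h1 : ∀ x ∈ Set.uIcc (0:ℝ) b,
        HasDerivAt (fun y => Real.arctan (c * Real.tan y) / c) (f x) x := by
      intro x hx
      rw [Set.uIcc_of_le hb.1] at hx
      have hcos : 0 < Real.cos x :=
        Real.cos_pos_of_mem_Ioo ⟨by linarith [hx.1, Real.pi_pos], lt_of_le_of_lt hx.2 hb.2⟩
      have ht := (Real.hasDerivAt_tan hcos.ne').const_mul c
      have h2 := ((Real.hasDerivAt_arctan (c * Real.tan x)).comp x ht).div_const c
      refine h2.congr_deriv ?_
      have htan : Real.tan x = Real.sin x / Real.cos x := Real.tan_eq_sin_div_cos x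
      rw [hf, htan]
      field_simp [hcos.ne']
    rw [intervalIntegral.integral_eq_sub_of_hasDerivAt h1 (hint 0 b)]
    simp
  have hc1 : Tendsto (fun b => ∫ x in (0:ℝ)..b, f x) (𝓝[<] (Real.pi/2))
      (𝓝 (∫ x in (0:ℝ)..(Real.pi/2), f x)) :=
    ((intervalIntegral.continuous_primitive hint 0).tendsto _).mono_left nhdsWithin_le_nhds
  have hc2 : Tendsto (fun b => ∫ x in (0:ℝ)..b, f x) (𝓝[<] (Real.pi/2))
      (𝓝 (Real.pi / (2 * c))) := by
    have h1 : Tendsto (fun b => c * Real.tan b) (𝓝[<] (Real.pi/2)) atTop :=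
      Real.tendsto_tan_pi_div_two.const_mul_atTop hc
    have htan : Tendsto (fun b => Real.arctan (c * Real.tan b) / c) (𝓝[<] (Real.pi/2))
        (𝓝 (Real.pi / 2 / c)) :=
      (((Real.tendsto_arctan_atTop.mono_right nhdsWithin_le_nhds).comp h1).div_const c)
    rw [div_div] at htan
    refine htan.congr' ?_
    filter_upwards [Ico_mem_nhdsLT_of_mem
      (Set.mem_Ioc.mpr ⟨by positivity, le_refl _⟩)] with b hb using (key b hb).symm
  exact tendsto_nhds_unique hc1 hc2

private lemma integral_full (c : ℝ) (hc : 0 < c) :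
    ∫ x in (0:ℝ)..(2*Real.pi), 1 / (Real.cos x ^ 2 + c ^ 2 * Real.sin x ^ 2)
      = 2 * Real.pi / c := by
  set f : ℝ → ℝ := fun x => 1 / (Real.cos x ^ 2 + c ^ 2 * Real.sin x ^ 2) with hf
  have hfc : Continuous f :=
    continuous_const.div (by continuity) (fun x => (denom_pos c hc x).ne')
  have hint : ∀ a b : ℝ, IntervalIntegrable f MeasureTheory.volume a b :=
    fun a b => hfc.intervalIntegrable a b
  have hhalf : (∫ x in (Real.pi/2)..Real.pi, f x) = ∫ x in (0:ℝ)..(Real.pi/2), f x := by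
    have := intervalIntegral.integral_comp_sub_left f Real.pi (a := 0) (b := Real.pi/2)
    rw [sub_zero] at this
    rw [show Real.pi - Real.pi/2 = Real.pi/2 by ring] at this
    rw [← this]
    refine intervalIntegral.integral_congr fun x _ => ?_
    simp [hf, Real.cos_pi_sub, Real.sin_pi_sub]
  have hpi : (∫ x in (0:ℝ)..Real.pi, f x) = Real.pi / c := by
    rw [← intervalIntegral.integral_add_adjacent_intervals (hint 0 (Real.pi/2))
      (hint (Real.pi/2) Real.pi), hhalf, integral_quarter c hc]
    ring
  have hsecond : (∫ x in Real.pi..(2*Real.pi), f x) = ∫ x in (0:ℝ)..Real.pi, f x := by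
    have := intervalIntegral.integral_comp_add_right f Real.pi (a := 0) (b := Real.pi)
    rw [zero_add, show Real.pi + Real.pi = 2 * Real.pi by ring] at this
    rw [← this]
    refine intervalIntegral.integral_congr fun x _ => ?_
    simp [hf, Real.cos_add_pi, Real.sin_add_pi]
  rw [← intervalIntegral.integral_add_adjacent_intervals (hint 0 Real.pi)
    (hint Real.pi (2*Real.pi)), hsecond, hpi]
  ring

/-- closed form of the Fisher information of the covariant POVM with
`d = ±(n × a)`: for `0 ≤ q < 1`,
`(1/2π) ∫₀^{2π} q²·cos²x/(1 + q·sin x) dx = 1 − √(1 − q²)`; moreover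
`1 − √(1 − q'²) ≤ 1 − √(1 − q')` for all `0 ≤ q' ≤ 1`. -/
theorem fisher_information_cross_covariant (q : ℝ) (hq0 : 0 ≤ q) (hq1 : q < 1) :
    (1 / (2 * Real.pi)) *
        (∫ x in (0 : ℝ)..(2 * Real.pi),
          q ^ 2 * Real.cos x ^ 2 / (1 + q * Real.sin x))
      = 1 - Real.sqrt (1 - q ^ 2)
    ∧ ∀ q' : ℝ, 0 ≤ q' → q' ≤ 1 →
        1 - Real.sqrt (1 - q' ^ 2) ≤ 1 - Real.sqrt (1 - q') := by
  constructor
  · set c : ℝ := Real.sqrt (1 - q ^ 2) with hcdef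
    have hq2 : q ^ 2 < 1 := by nlinarith
    have hc2 : c ^ 2 = 1 - q ^ 2 := Real.sq_sqrt (by linarith)
    have hc : 0 < c := Real.sqrt_pos.mpr (by linarith)
    set g : ℝ → ℝ := fun x => 1 / (Real.cos x ^ 2 + c ^ 2 * Real.sin x ^ 2) with hg
    have hgc : Continuous g :=
      continuous_const.div (by continuity) (fun x => (denom_pos c hc x).ne')
    have hpos : ∀ x : ℝ, 0 < 1 + q * Real.sin x := by
      intro x
      nlinarith [Real.neg_one_le_sin x, Real.sin_le_one x]
    -- pointwise decomposition
    have hdecomp : ∀ x : ℝ, q ^ 2 * Real.cos x ^ 2 / (1 + q * Real.sin x)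
        = (1 - q * Real.sin x) - (1 - q ^ 2) * g x
          + (1 - q ^ 2) * q * (Real.sin x * g x) := by
      intro x
      have h1 : (1 + q * Real.sin x) ≠ 0 := (hpos x).ne'
      have h2 : (Real.cos x ^ 2 + c ^ 2 * Real.sin x ^ 2) ≠ 0 := (denom_pos c hc x).ne'
      have hs : Real.cos x ^ 2 = 1 - Real.sin x ^ 2 := Real.cos_sq' x
      have h3 : 1 - q ^ 2 * Real.sin x ^ 2 ≠ 0 := by
        intro h; apply h2; rw [hc2, hs]; linear_combination h
      have h4 : Real.cos x ^ 2 + c ^ 2 * Real.sin x ^ 2 = 1 - q ^ 2 * Real.sin x ^ 2 := by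
        rw [hc2, hs]; ring
      rw [hg]
      simp only [h4]
      rw [hs]
      field_simp
      ring
    have hIg : (∫ x in (0:ℝ)..(2*Real.pi), g x) = 2 * Real.pi / c := integral_full c hc
    have hIsg : (∫ x in (0:ℝ)..(2*Real.pi), Real.sin x * g x) = 0 := by
      have hcomp := intervalIntegral.integral_comp_sub_left
        (fun x => Real.sin x * g x) (2*Real.pi) (a := 0) (b := 2*Real.pi)
      rw [sub_zero, sub_self] at hcomp
      have heq : (∫ x in (0:ℝ)..(2*Real.pi), Real.sin (2*Real.pi - x) * g (2*Real.pi - x))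
          = ∫ x in (0:ℝ)..(2*Real.pi), -(Real.sin x * g x) := by
        refine intervalIntegral.integral_congr fun x _ => ?_
        have hsin : Real.sin (2*Real.pi - x) = - Real.sin x := by
          rw [Real.sin_sub]; simp [Real.sin_two_pi, Real.cos_two_pi]
        have hcos : Real.cos (2*Real.pi - x) = Real.cos x := by
          rw [Real.cos_sub]; simp [Real.sin_two_pi, Real.cos_two_pi]
        simp [hg, hsin, hcos]
      rw [heq, intervalIntegral.integral_neg] at hcomp
      linarith [hcomp]
    have hint1 : IntervalIntegrable (fun x => 1 - q * Real.sin x)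
        MeasureTheory.volume 0 (2*Real.pi) := by
      apply Continuous.intervalIntegrable; continuity
    have hint2 : IntervalIntegrable (fun x => (1 - q ^ 2) * g x)
        MeasureTheory.volume 0 (2*Real.pi) := by
      apply Continuous.intervalIntegrable; exact continuous_const.mul hgc
    have hint3 : IntervalIntegrable (fun x => (1 - q ^ 2) * q * (Real.sin x * g x))
        MeasureTheory.volume 0 (2*Real.pi) := by
      apply Continuous.intervalIntegrable
      exact continuous_const.mul (Real.continuous_sin.mul hgc)
    have hI1 : (∫ x in (0:ℝ)..(2*Real.pi), (1 - q * Real.sin x)) = 2 * Real.pi := by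
      rw [intervalIntegral.integral_sub intervalIntegrable_const
        ((Real.continuous_sin.intervalIntegrable 0 (2*Real.pi)).const_mul q)]
      rw [intervalIntegral.integral_const_mul, integral_sin]
      simp [Real.cos_two_pi]
    have hmain : (∫ x in (0:ℝ)..(2*Real.pi),
        q ^ 2 * Real.cos x ^ 2 / (1 + q * Real.sin x)) = 2 * Real.pi - 2 * Real.pi * c := by
      rw [intervalIntegral.integral_congr (fun x _ => hdecomp x)]
      rw [intervalIntegral.integral_add (hint1.sub hint2) hint3,
        intervalIntegral.integral_sub hint1 hint2,
        intervalIntegral.integral_const_mul, intervalIntegral.integral_const_mul,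
        hI1, hIg, hIsg]
      have : (1 - q ^ 2) * (2 * Real.pi / c) = 2 * Real.pi * c := by
        rw [← hc2]; field_simp
      rw [this]; ring
    rw [hmain]
    have hpi : (2 * Real.pi) ≠ 0 := by positivity
    field_simp
  · intro q' h0 h1
    have : Real.sqrt (1 - q') ≤ Real.sqrt (1 - q' ^ 2) :=
      Real.sqrt_le_sqrt (by nlinarith)
    linarith
end
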